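/- Each of the following subgroups of the symmetric group on {1,…,14} has a normal subgroup whose order is a power of 2 with cyclic quotient: (i) ⟨(1,8)(2,13)(3,10)(4,12)(5,11)(6,9), (1,8)(2,12)(4,13)(5,9)(6,11)(7,14)⟩; (ii) ⟨(2,11)(3,7)(4,9)(5,12)(6,13)(10,14), (2,4)(3,10)(5,6)(7,14)(9,11)(12,13)⟩; (iii) ⟨(1,14)(2,9)(4,6)(5,12)(7,8)(11,13), (1,8)(2,10)(3,9)(4,7)(6,13)(11,14)⟩; (iv) ⟨(1,11,3)(2,6,14)(4,10,8)(7,9,13), (1,3)(2,9)(4,5)(6,13)(8,10)(11,12)⟩. -/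

import Mathlib

/-- `G₆⁴ = ⟨(1,8)(2,13)(3,10)(4,12)(5,11)(6,9), (1,8)(2,12)(4,13)(5,9)(6,11)(7,14)⟩`. -/
def G₆₄ : Subgroup (Equiv.Perm (Fin 14)) :=
  Subgroup.closure {c[1,8] * c[2,13] * c[3,10] * c[4,12] * c[5,11] * c[6,9],
    c[1,8] * c[2,12] * c[4,13] * c[5,9] * c[6,11] * c[7,14]}

/-- `G₆⁵ = ⟨(2,11)(3,7)(4,9)(5,12)(6,13)(10,14), (2,4)(3,10)(5,6)(7,14)(9,11)(12,13)⟩`. -/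
def G₆₅ : Subgroup (Equiv.Perm (Fin 14)) :=
  Subgroup.closure {c[2,11] * c[3,7] * c[4,9] * c[5,12] * c[6,13] * c[10,14],
    c[2,4] * c[3,10] * c[5,6] * c[7,14] * c[9,11] * c[12,13]}

/-- `G₆⁸ = ⟨(1,14)(2,9)(4,6)(5,12)(7,8)(11,13), (1,8)(2,10)(3,9)(4,7)(6,13)(11,14)⟩`. -/
def G₆₈ : Subgroup (Equiv.Perm (Fin 14)) :=
  Subgroup.closure {c[1,14] * c[2,9] * c[4,6] * c[5,12] * c[7,8] * c[11,13],
    c[1,8] * c[2,10] * c[3,9] * c[4,7] * c[6,13] * c[11,14]}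

/-- `G₆⁹ = ⟨(1,11,3)(2,6,14)(4,10,8)(7,9,13), (1,3)(2,9)(4,5)(6,13)(8,10)(11,12)⟩`. -/
def G₆₉ : Subgroup (Equiv.Perm (Fin 14)) :=
  Subgroup.closure {c[1,11,3] * c[2,6,14] * c[4,10,8] * c[7,9,13],
    c[1,3] * c[2,9] * c[4,5] * c[6,13] * c[8,10] * c[11,12]}

/-- `G` has a normal subgroup of `2`-power order with cyclic quotient (type `Ψ₂`). -/
def IsPsiTwo (G : Subgroup (Equiv.Perm (Fin 14))) : Prop :=
  ∃ P : Subgroup G, ∃ hP : P.Normal, (∃ m : ℕ, Nat.card P = 2 ^ m) ∧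
    (letI := hP; IsCyclic (G ⧸ P))


/-!
Two involutions `a`, `b` generate a dihedral group, whose elements are `(a * b) ^ k` and
`(a * b) ^ k * a`; when `a * b` has `2`-power order it is a `2`-group. This covers `G₆⁴`, `G₆⁵`
(where `a * b` has order `2`) and `G₆⁸` (order `4`). In `G₆⁹ ≅ A₄` the generator `a` has order `3`;
the involution `b` and its conjugate `a * b * a⁻¹` commute and generate a Klein four-group `V`,
normalized by `a` because `a * (a * b * a⁻¹) * a⁻¹ = b * (a * b * a⁻¹)`. Since `b ∈ V`, the quotient
by `V` is generated by the image of `a`, hence cyclic.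
-/

open Subgroup

set_option maxRecDepth 10000

section Dihedral

variable {G : Type*} [Group G] {a b : G}

lemma inv_eq_self_of_sq_eq_one {x : G} (hx : x ^ 2 = 1) : x⁻¹ = x :=
  inv_eq_of_mul_eq_one_right (by rw [← sq, hx])

lemma mul_zpow_mul_self_eq_zpow_neg_mul (ha : a ^ 2 = 1) (hb : b ^ 2 = 1) (k : ℤ) :
    a * (a * b) ^ k = (a * b) ^ (-k) * a := by
  have ha' : a⁻¹ = a := inv_eq_self_of_sq_eq_one ha
  have hb' : b⁻¹ = b := inv_eq_self_of_sq_eq_one hb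
  have hconj : a * (a * b) * a⁻¹ = (a * b)⁻¹ := by
    rw [mul_inv_rev, hb', ha', ← mul_assoc, ← sq, ha, one_mul]
  rw [zpow_neg, ← inv_zpow, ← hconj, conj_zpow, ha', mul_assoc, ← sq, ha, mul_one]

lemma exists_zpow_of_mem_closure_pair (ha : a ^ 2 = 1) (hb : b ^ 2 = 1) {x : G}
    (hx : x ∈ closure {a, b}) : ∃ k : ℤ, x = (a * b) ^ k ∨ x = (a * b) ^ k * a := by
  have ha' : a⁻¹ = a := inv_eq_self_of_sq_eq_one ha
  have hswap := mul_zpow_mul_self_eq_zpow_neg_mul ha hb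
  induction hx using closure_induction with
  | mem x hx =>
    rcases hx with rfl | rfl
    · exact ⟨0, .inr (by simp)⟩
    · refine ⟨-1, .inr ?_⟩
      rw [zpow_neg_one, mul_inv_rev, ha', mul_assoc, ← sq, ha, mul_one]
      exact (inv_eq_self_of_sq_eq_one hb).symm
  | one => exact ⟨0, .inl (by simp)⟩
  | mul x y _ _ hx hy =>
    obtain ⟨k, rfl | rfl⟩ := hx <;> obtain ⟨l, rfl | rfl⟩ := hy
    · exact ⟨k + l, .inl (zpow_add _ _ _).symm⟩
    · exact ⟨k + l, .inr (by rw [zpow_add, mul_assoc])⟩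
    · exact ⟨k - l, .inr (by rw [mul_assoc, hswap, ← mul_assoc, ← zpow_add, sub_eq_add_neg])⟩
    · refine ⟨k - l, .inl ?_⟩
      rw [mul_assoc, ← mul_assoc a, hswap, mul_assoc, ← sq, ha, mul_one, ← zpow_add,
        sub_eq_add_neg]
  | inv x _ hx =>
    obtain ⟨k, rfl | rfl⟩ := hx
    · exact ⟨-k, .inl (zpow_neg _ _).symm⟩
    · exact ⟨k, .inr (by rw [mul_inv_rev, ha', ← zpow_neg, hswap, neg_neg])⟩

lemma isPGroup_two_closure_pair (ha : a ^ 2 = 1) (hb : b ^ 2 = 1) {n : ℕ}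
    (hab : (a * b) ^ 2 ^ n = 1) : IsPGroup 2 (closure {a, b}) := by
  rintro ⟨x, hx⟩
  obtain ⟨k, rfl | rfl⟩ := exists_zpow_of_mem_closure_pair ha hb hx
  · refine ⟨n, Subtype.ext ?_⟩
    simp only [SubmonoidClass.coe_pow, OneMemClass.coe_one]
    rw [← zpow_natCast, ← zpow_mul, mul_comm, zpow_mul, zpow_natCast, hab, one_zpow]
  · refine ⟨1, Subtype.ext ?_⟩
    simp only [pow_one, SubmonoidClass.coe_pow, OneMemClass.coe_one]
    rw [sq, mul_assoc, ← mul_assoc a, mul_zpow_mul_self_eq_zpow_neg_mul ha hb, mul_assoc,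
      ← sq, ha, mul_one, ← zpow_add, add_neg_cancel, zpow_zero]

end Dihedral

lemma mem_normalizer_closure_of_conj_mem {G : Type*} [Group G] [Finite G] {s : Set G} {g : G}
    (h : ∀ x ∈ s, g * x * g⁻¹ ∈ closure s) : g ∈ normalizer (closure s : Set G) := by
  refine mem_normalizer_fintype fun x hx => ?_
  suffices closure s ≤ (closure s).comap (MulAut.conj g).toMonoidHom from this hx
  exact (closure_le _).2 h

lemma isCyclic_quotient_closure_pair {G : Type*} [Group G] {a b : G} {V : Subgroup G}
    [(V.subgroupOf (closure {a, b})).Normal] (hb : b ∈ V) :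
    IsCyclic (closure {a, b} ⧸ V.subgroupOf (closure {a, b})) := by
  set N := V.subgroupOf (closure {a, b})
  let g : closure {a, b} ⧸ N := QuotientGroup.mk ⟨a, subset_closure (by simp)⟩
  have hgen : closure (((↑) : closure {a, b} → G) ⁻¹' {a, b}) ≤
      (zpowers g).comap (QuotientGroup.mk' N) := by
    rw [closure_le]
    rintro x (hx | hx)
    · exact ⟨1, by simp [g, ← hx]⟩
    · rw [Set.mem_singleton_iff] at hx
      have hxN : x ∈ N := mem_subgroupOf.2 (by rwa [hx])
      simp [(QuotientGroup.eq_one_iff x).2 hxN]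
  refine ⟨g, fun q => ?_⟩
  obtain ⟨x, rfl⟩ := QuotientGroup.mk_surjective q
  exact mem_zpowers_iff.1 <| hgen <| by rw [closure_closure_coe_preimage]; exact mem_top x

section PsiTwo

variable {a b : Equiv.Perm (Fin 14)}

lemma isPsiTwo_closure_pair {V : Subgroup (Equiv.Perm (Fin 14))} (hV : IsPGroup 2 V)
    (hbV : b ∈ V) (hVG : V ≤ closure {a, b}) (hGV : closure {a, b} ≤ normalizer (V : Set _)) :
    IsPsiTwo (closure {a, b}) := by
  have := normal_subgroupOf_of_le_normalizer hGV
  refine ⟨V.subgroupOf (closure {a, b}), this, ?_, isCyclic_quotient_closure_pair hbV⟩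
  exact IsPGroup.iff_card.1 (hV.of_equiv (subgroupOfEquivOfLe hVG).symm)

lemma isPsiTwo_closure_pair_of_isPGroup (h : IsPGroup 2 (closure {a, b})) :
    IsPsiTwo (closure {a, b}) :=
  isPsiTwo_closure_pair h (subset_closure (by simp)) le_rfl le_normalizer

lemma isPsiTwo_closure_pair_of_conj (hb : b ^ 2 = 1) (hcomm : (b * (a * b * a⁻¹)) ^ 2 = 1)
    (hconj : a * (a * b * a⁻¹) * a⁻¹ = b * (a * b * a⁻¹)) : IsPsiTwo (closure {a, b}) := by
  have hb' : (a * b * a⁻¹) ^ 2 = 1 := by rw [conj_pow, hb, mul_one, mul_inv_cancel]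
  have hbV : b ∈ closure {b, a * b * a⁻¹} := subset_closure (by simp)
  have hb'V : a * b * a⁻¹ ∈ closure {b, a * b * a⁻¹} := subset_closure (by simp)
  refine isPsiTwo_closure_pair (isPGroup_two_closure_pair (n := 1) hb hb' (by rwa [pow_one]))
    hbV ?_ ?_
  · have haG : a ∈ closure {a, b} := subset_closure (by simp)
    have hbG : b ∈ closure {a, b} := subset_closure (by simp)
    rw [closure_le]
    rintro x (rfl | rfl)
    exacts [hbG, mul_mem (mul_mem haG hbG) (inv_mem haG)]
  · rw [closure_le]
    rintro x (rfl | rfl)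
    · refine mem_normalizer_closure_of_conj_mem ?_
      rintro y (rfl | rfl)
      exacts [hb'V, hconj ▸ mul_mem hbV hb'V]
    · exact le_normalizer hbV

end PsiTwo

/-- Each of the subgroups `G₆⁴`, `G₆⁵`, `G₆⁸`, `G₆⁹` has a normal subgroup
of `2`-power order with cyclic quotient. -/
theorem subgroups_of_G₆_are_Psi₂ :
    IsPsiTwo G₆₄ ∧ IsPsiTwo G₆₅ ∧ IsPsiTwo G₆₈ ∧ IsPsiTwo G₆₉ := by
  refine ⟨?_, ?_, ?_, ?_⟩
  · exact isPsiTwo_closure_pair_of_isPGroup <|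
      isPGroup_two_closure_pair (n := 1) (by decide) (by decide) (by decide)
  · exact isPsiTwo_closure_pair_of_isPGroup <|
      isPGroup_two_closure_pair (n := 1) (by decide) (by decide) (by decide)
  · exact isPsiTwo_closure_pair_of_isPGroup <|
      isPGroup_two_closure_pair (n := 2) (by decide) (by decide) (by decide)
  · exact isPsiTwo_closure_pair_of_conj (by decide) (by decide) (by decide)
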